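/- arXiv:1901.10967 — 2 statements merged into one kernel-verified Lean document; each statement's English description precedes it below -/
import Mathlib

section
/- Let d_0 : ℝ → ℝ be real-analytic at α with a zero of exact order μ ≥ 1 at α (d_0(α) = d_0'(α) = ... = d_0^{(μ−1)}(α) = 0 and d_0^{(μ)}(α) ≠ 0). Suppose (ε_n) is a real sequence with ε_n → 0 and (ζ_n) a real sequence with ∑ ζ_n² < ∞, such that d_0(α + ε_n) + ζ_n = 0 for all n. Then ∑_n ε_n^{2μ} < ∞, i.e., ε_n ∈ l_{2μ}. -/
open Filter Topology Asymptotics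

/-! Near a zero of exact order `μ`, an analytic function factors as `(z - α) ^ μ • g z` with
`g α ≠ 0`, so `|ε n| ^ μ = O(|d₀ (α + ε n)|) = O(|ζ n|)`; squaring and comparing with the
summable `ζ n ^ 2` gives the claim. -/

theorem AnalyticAt.isBigO_sub_pow_of_analyticOrderAt_eq {𝕜 E : Type*} [NontriviallyNormedField 𝕜]
    [NormedAddCommGroup E] [NormedSpace 𝕜 E] {f : 𝕜 → E} {z₀ : 𝕜} {n : ℕ}
    (hf : AnalyticAt 𝕜 f z₀) (hn : analyticOrderAt f z₀ = n) :
    (fun z => (z - z₀) ^ n) =O[𝓝 z₀] f := by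
  obtain ⟨g, hg, hg₀, hfg⟩ := hf.analyticOrderAt_eq_natCast.mp hn
  have hg_bounded_below : (fun _ => (1 : 𝕜)) =O[𝓝 z₀] g := by
    rw [isBigO_const_left_iff_pos_le_norm one_ne_zero]
    have hpos : 0 < ‖g z₀‖ := norm_pos_iff.mpr hg₀
    exact ⟨‖g z₀‖ / 2, by positivity,
      hg.continuousAt.norm.eventually (eventually_ge_nhds (half_lt_self hpos))⟩
  have hsmul : (fun z => (z - z₀) ^ n • (1 : 𝕜)) =O[𝓝 z₀] fun z => (z - z₀) ^ n • g z :=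
    (isBigO_refl _ _).smul hg_bounded_below
  simpa using hsmul.trans_eventuallyEq (hfg.mono fun _ hz => hz.symm)

theorem summable_abs_pow_mul_of_isBigO {x y : ℕ → ℝ} {μ p : ℕ}
    (hxy : (fun n => x n ^ μ) =O[atTop] y) (hy : Summable fun n => |y n| ^ p) :
    Summable fun n => |x n| ^ (p * μ) := by
  refine summable_of_isBigO_nat hy ?_
  simpa [mul_comm p μ, pow_mul, abs_pow] using hxy.norm_norm.pow p

theorem stmt11_general (d0 : ℝ → ℝ) (α : ℝ) (hA : AnalyticAt ℝ d0 α)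
    (μ : ℕ)
    (hzero : ∀ j < μ, iteratedDeriv j d0 α = 0)
    (hne : iteratedDeriv μ d0 α ≠ 0)
    (ε : ℕ → ℝ) (hε : Tendsto ε atTop (nhds 0))
    (ζ : ℕ → ℝ) (hζ : Summable (fun n => (ζ n) ^ 2))
    (heq : ∀ n, d0 (α + ε n) + ζ n = 0) :
    Summable (fun n => |ε n| ^ (2 * μ)) := by
  have horder : analyticOrderAt d0 α = μ :=
    (analyticOrderAt_eq_nat_iff_iteratedDeriv_eq_zero hA).mpr ⟨hzero, hne⟩
  have hshift : Tendsto (fun n => α + ε n) atTop (𝓝 α) := by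
    simpa using hε.const_add α
  have hεζ : (fun n => ε n ^ μ) =O[atTop] ζ := by
    have h := (hA.isBigO_sub_pow_of_analyticOrderAt_eq horder).comp_tendsto hshift
    simpa [Function.comp_def, eq_neg_of_add_eq_zero_left (heq _)] using h
  exact summable_abs_pow_mul_of_isBigO hεζ (by simpa only [sq_abs] using hζ)

theorem stmt11 (d0 : ℝ → ℝ) (α : ℝ) (hA : AnalyticAt ℝ d0 α)
    (μ : ℕ) (hμ : 1 ≤ μ)
    (hzero : ∀ j < μ, iteratedDeriv j d0 α = 0)
    (hne : iteratedDeriv μ d0 α ≠ 0)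
    (ε : ℕ → ℝ) (hε : Tendsto ε atTop (nhds 0))
    (ζ : ℕ → ℝ) (hζ : Summable (fun n => (ζ n) ^ 2))
    (heq : ∀ n, d0 (α + ε n) + ζ n = 0) :
    Summable (fun n => |ε n| ^ (2 * μ)) :=
  stmt11_general d0 α hA μ hzero hne ε hε ζ hζ heq
end

section
/- Let (λ_n) and (λ_n⁰) be sequences of positive reals with λ_n⁰ → ∞ and ∑ |λ_n − λ_n⁰|/λ_n⁰ < ∞. Suppose F and F₀ are functions on (−∞,0) with F(λ)/F₀(λ) = C·∏_{n=1}^∞ (λ_n⁰/λ_n)·(1 + (λ_n − λ_n⁰)/(λ_n⁰ − λ)) for all λ < 0, and lim_{λ→−∞} F(λ)/F₀(λ) = 1. Then C = ∏_{n=1}^∞ (λ_n/λ_n⁰), and hence F(λ)/F₀(λ) = ∏_{n=1}^∞ (λ_n − λ)/(λ_n⁰ − λ) for all λ < 0. -/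
/-!
Taking logarithms, `log ((λₙ - λ) / (λₙ⁰ - λ))` lies between `0` and `log (λₙ / λₙ⁰)` for `λ ≤ 0`,
and the latter is summable because `∑ |λₙ - λₙ⁰| / λₙ⁰ < ∞`. Dominated convergence then gives
`∏ (λₙ - λ) / (λₙ⁰ - λ) → 1` as `λ → -∞`. The given product is this one divided by
`P = ∏ λₙ / λₙ⁰ > 0`, so `F / F₀ → C / P`, which forces `C = P`.
-/

open Filter Topology Real

namespace Real

variable {ι : Type*} {a b : ι → ℝ}

theorem tprod_pos_of_summable_log {f : ι → ℝ} (hf : ∀ i, 0 < f i)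
    (hlog : Summable fun i => log (f i)) : 0 < ∏' i, f i := by
  rw [← rexp_tsum_eq_tprod hf hlog]
  exact exp_pos _

theorem summable_log_div_of_summable_abs_sub_div (hb : ∀ i, 0 < b i)
    (h : Summable fun i => |a i - b i| / b i) : Summable fun i => log (a i / b i) := by
  have hrel : Summable fun i => (a i - b i) / b i :=
    h.of_norm_bounded fun i => by rw [norm_div, norm_of_nonneg (hb i).le, norm_eq_abs]
  refine (summable_log_one_add_of_summable hrel).congr fun i => ?_
  rw [one_add_div (hb i).ne', add_sub_cancel]

theorem abs_log_div_sub_le {x y l : ℝ} (hx : 0 < x) (hy : 0 < y) (hl : l ≤ 0) :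
    |log ((x - l) / (y - l))| ≤ |log (x / y)| := by
  have hxl : 0 < x - l := by linarith
  have hyl : 0 < y - l := by linarith
  rcases le_total x y with hxy | hyx
  · have hle_one : (x - l) / (y - l) ≤ 1 := (div_le_one hyl).mpr (by linarith)
    have hge : x / y ≤ (x - l) / (y - l) := by
      rw [div_le_div_iff₀ hy hyl]; nlinarith
    have hlog := log_le_log (by positivity) hge
    rw [abs_of_nonpos (log_nonpos (by positivity) hle_one),
      abs_of_nonpos (hlog.trans (log_nonpos (by positivity) hle_one))]
    linarith
  · have hge_one : 1 ≤ (x - l) / (y - l) := (one_le_div hyl).mpr (by linarith)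
    have hle : (x - l) / (y - l) ≤ x / y := by
      rw [div_le_div_iff₀ hyl hy]; nlinarith
    exact abs_le_abs_of_nonneg (log_nonneg hge_one) (log_le_log (by positivity) hle)

theorem tendsto_div_sub_atBot (x y : ℝ) :
    Tendsto (fun l => (x - l) / (y - l)) atBot (𝓝 1) := by
  have hden : Tendsto (fun l : ℝ => y - l) atBot atTop :=
    tendsto_atTop_add_const_left _ y tendsto_neg_atBot_atTop
  have hone : Tendsto (fun l => 1 + (x - y) / (y - l)) atBot (𝓝 1) := by
    simpa using (tendsto_const_nhds.div_atTop hden).const_add 1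
  refine hone.congr' ?_
  filter_upwards [hden.eventually_gt_atTop 0] with l hl
  rw [one_add_div hl.ne']
  ring_nf

theorem summable_log_div_sub (ha : ∀ i, 0 < a i) (hb : ∀ i, 0 < b i)
    (hlog : Summable fun i => log (a i / b i)) {l : ℝ} (hl : l ≤ 0) :
    Summable fun i => log ((a i - l) / (b i - l)) :=
  hlog.abs.of_norm_bounded fun i => abs_log_div_sub_le (ha i) (hb i) hl

theorem multipliable_div_sub (ha : ∀ i, 0 < a i) (hb : ∀ i, 0 < b i)
    (hlog : Summable fun i => log (a i / b i)) {l : ℝ} (hl : l ≤ 0) :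
    Multipliable fun i => (a i - l) / (b i - l) :=
  multipliable_of_summable_log (fun i => div_pos (by linarith [ha i]) (by linarith [hb i]))
    (summable_log_div_sub ha hb hlog hl)

theorem tendsto_tprod_div_sub_atBot (ha : ∀ i, 0 < a i) (hb : ∀ i, 0 < b i)
    (hlog : Summable fun i => log (a i / b i)) :
    Tendsto (fun l => ∏' i, (a i - l) / (b i - l)) atBot (𝓝 1) := by
  have hterm (i : ι) : Tendsto (fun l => log ((a i - l) / (b i - l))) atBot (𝓝 0) := by
    simpa [Function.comp_def] using
      (continuousAt_log one_ne_zero).tendsto.comp (tendsto_div_sub_atBot (a i) (b i))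
  have hsum : Tendsto (fun l => ∑' i, log ((a i - l) / (b i - l))) atBot (𝓝 0) := by
    simpa using tendsto_tsum_of_dominated_convergence hlog.abs hterm
      ((eventually_le_atBot 0).mono fun l hl i => abs_log_div_sub_le (ha i) (hb i) hl)
  have hexp : Tendsto (fun l => rexp (∑' i, log ((a i - l) / (b i - l)))) atBot (𝓝 1) := by
    simpa using hsum.rexp
  refine hexp.congr' ?_
  filter_upwards [eventually_le_atBot 0] with l hl
  exact rexp_tsum_eq_tprod (fun i => div_pos (by linarith [ha i]) (by linarith [hb i]))
    (summable_log_div_sub ha hb hlog hl)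

theorem tprod_div_mul_one_add_div_sub (ha : ∀ i, 0 < a i) (hb : ∀ i, 0 < b i)
    (hlog : Summable fun i => log (a i / b i)) {l : ℝ} (hl : l ≤ 0) :
    ∏' i, b i / a i * (1 + (a i - b i) / (b i - l)) =
      (∏' i, (a i - l) / (b i - l)) / ∏' i, a i / b i := by
  have hpos := tprod_pos_of_summable_log (fun i => div_pos (ha i) (hb i)) hlog
  have hq := (multipliable_of_summable_log (fun i => div_pos (ha i) (hb i)) hlog).hasProd
  rw [← ((multipliable_div_sub ha hb hlog hl).hasProd.div₀ hq hpos.ne').tprod_eq]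
  refine tprod_congr fun i => ?_
  have hbl : b i - l ≠ 0 := by linarith [hb i]
  field_simp [(ha i).ne', (hb i).ne']
  ring

end Real

theorem stmt14_general (lam lam0 : ℕ → ℝ)
    (hlampos : ∀ n, 0 < lam n) (hlam0pos : ∀ n, 0 < lam0 n)
    (hsum : Summable (fun n => |lam n - lam0 n| / lam0 n))
    (F F₀ : ℝ → ℝ) (C : ℝ)
    (hfac : ∀ l : ℝ, l < 0 →
      F l / F₀ l = C * ∏' n, (lam0 n / lam n) * (1 + (lam n - lam0 n) / (lam0 n - l)))
    (hlim : Tendsto (fun l : ℝ => F l / F₀ l) atBot (nhds 1)) :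
    C = ∏' n, lam n / lam0 n ∧
      ∀ l : ℝ, l < 0 → F l / F₀ l = ∏' n, (lam n - l) / (lam0 n - l) := by
  have hlog := summable_log_div_of_summable_abs_sub_div hlam0pos hsum
  set P := ∏' n, lam n / lam0 n
  have hP : 0 < P := tprod_pos_of_summable_log (fun n => div_pos (hlampos n) (hlam0pos n)) hlog
  have hratio : ∀ l : ℝ, l < 0 → F l / F₀ l = C / P * ∏' n, (lam n - l) / (lam0 n - l) := by
    intro l hl
    rw [hfac l hl, tprod_div_mul_one_add_div_sub hlampos hlam0pos hlog hl.le]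
    ring
  have hCP : C / P = 1 := by
    have hprod := (tendsto_tprod_div_sub_atBot hlampos hlam0pos hlog).const_mul (C / P)
    rw [mul_one] at hprod
    refine tendsto_nhds_unique (hprod.congr' ?_) hlim
    filter_upwards [eventually_lt_atBot 0] with l hl
    exact (hratio l hl).symm
  refine ⟨(div_eq_one_iff_eq hP.ne').mp hCP, fun l hl => ?_⟩
  rw [hratio l hl, hCP, one_mul]

theorem stmt14 (lam lam0 : ℕ → ℝ)
    (hlampos : ∀ n, 0 < lam n) (hlam0pos : ∀ n, 0 < lam0 n)
    (hinf : Tendsto lam0 atTop atTop)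
    (hsum : Summable (fun n => |lam n - lam0 n| / lam0 n))
    (F F₀ : ℝ → ℝ) (C : ℝ)
    (hfac : ∀ l : ℝ, l < 0 →
      F l / F₀ l = C * ∏' n, (lam0 n / lam n) * (1 + (lam n - lam0 n) / (lam0 n - l)))
    (hlim : Tendsto (fun l : ℝ => F l / F₀ l) atBot (nhds 1)) :
    C = ∏' n, lam n / lam0 n ∧
      ∀ l : ℝ, l < 0 → F l / F₀ l = ∏' n, (lam n - l) / (lam0 n - l) :=
  stmt14_general lam lam0 hlampos hlam0pos hsum F F₀ C hfac hlim
end
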